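/- arXiv:1808.06371 — 2 statements merged into one kernel-verified Lean document; each statement's English description precedes it below -/
import Mathlib

section
/- Let m, m' be positive integers and let E : ℤᵐ → ℤ^{m'} be an integral affine transformation, i.e. E(p) = Ap + q for some m'×m matrix A with integer entries and some q ∈ ℤ^{m'}. If P ⊆ ℤᵐ is a polyhedral set, then the image E(P) ⊆ ℤ^{m'} is a polyhedral set. -/
/-- An elementary subset of `ℤᵐ`: a hyperplane, an open affine half-space, or a
congruence set, defined by the standard scalar product. -/
def IsElementarySet {m : ℕ} (E : Set (Fin m → ℤ)) : Prop :=
  (∃ (u : Fin m → ℤ) (a : ℤ), E = {z | (∑ i, u i * z i) = a}) ∨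
  (∃ (u : Fin m → ℤ) (a : ℤ), E = {z | (∑ i, u i * z i) > a}) ∨
  (∃ (u : Fin m → ℤ) (a : ℤ) (b : ℤ), 0 < b ∧ E = {z | (∑ i, u i * z i) ≡ a [ZMOD b]})

/-- A basic polyhedral set: a finite intersection of elementary sets. -/
def IsBasicPolyhedralSet {m : ℕ} (B : Set (Fin m → ℤ)) : Prop :=
  ∃ (k : ℕ) (E : Fin k → Set (Fin m → ℤ)),
    (∀ i, IsElementarySet (E i)) ∧ B = ⋂ i, E i

/-- A polyhedral set: a finite union of basic polyhedral sets. -/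
def IsPolyhedralSet {m : ℕ} (P : Set (Fin m → ℤ)) : Prop :=
  ∃ (k : ℕ) (B : Fin k → Set (Fin m → ℤ)),
    (∀ i, IsBasicPolyhedralSet (B i)) ∧ P = ⋃ i, B i

/-!
`E '' P` is the projection onto the first `m'` coordinates of the graph
`{(y, x) | y = E x, x ∈ P}`, which is polyhedral as an intersection of preimages under affine
maps; so it suffices to eliminate one variable at a time. Let `B ⊆ ℤⁿ⁺¹` be basic and let `M` be
a common multiple of its moduli. Moving the last coordinate `x` of a point `snoc z x ∈ B` by `±M`
keeps every congruence and every constraint `a * x + v ⬝ᵥ z ⋈ c` whose slack is at least `|a| * M`,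
so `x` can be moved towards `[0, M)` until it lands there or some constraint with `a ≠ 0` has
slack below `|a| * M`. Either way `x` is pinned by one of finitely many equations
`a * x = v ⬝ᵥ z + e` with `a ≠ 0`, and substituting `x = (v ⬝ᵥ z + e) / a` into `B` leaves a basic
set in `z` together with the condition `a ∣ v ⬝ᵥ z + e`.
-/

open Matrix

variable {n k : ℕ}

lemma isElementarySet_eq (v : Fin n → ℤ) (c a : ℤ) : IsElementarySet {z | v ⬝ᵥ z + c = a} :=
  Or.inl ⟨v, a - c, Set.ext fun z => show v ⬝ᵥ z + c = a ↔ v ⬝ᵥ z = a - c by omega⟩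

lemma isElementarySet_modEq (v : Fin n → ℤ) (c a : ℤ) {b : ℤ} (hb : 0 < b) :
    IsElementarySet {z | v ⬝ᵥ z + c ≡ a [ZMOD b]} :=
  Or.inr <| Or.inr ⟨v, a - c, b, hb, Set.ext fun z =>
    show v ⬝ᵥ z + c ≡ a [ZMOD b] ↔ v ⬝ᵥ z ≡ a - c [ZMOD b] by
      rw [Int.modEq_iff_dvd, Int.modEq_iff_dvd, sub_add_eq_sub_sub_swap]⟩

lemma IsBasicPolyhedralSet.of_iInter {ι : Type*} [Finite ι] {E : ι → Set (Fin n → ℤ)}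
    (hE : ∀ i, IsElementarySet (E i)) : IsBasicPolyhedralSet (⋂ i, E i) := by
  obtain ⟨k, ⟨e⟩⟩ := Finite.exists_equiv_fin ι
  exact ⟨k, E ∘ e.symm, fun i => hE _, (e.symm.surjective.iInter_comp E).symm⟩

lemma IsElementarySet.isBasicPolyhedralSet {E : Set (Fin n → ℤ)} (hE : IsElementarySet E) :
    IsBasicPolyhedralSet E :=
  ⟨1, fun _ => E, fun _ => hE, (Set.iInter_const E).symm⟩

lemma IsBasicPolyhedralSet.iInter {ι : Type*} [Finite ι] {B : ι → Set (Fin n → ℤ)}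
    (hB : ∀ i, IsBasicPolyhedralSet (B i)) : IsBasicPolyhedralSet (⋂ i, B i) := by
  choose k E hE hBE using hB
  rw [show (⋂ i, B i) = ⋂ p : Σ i, Fin (k i), E p.1 p.2 by rw [Set.iInter_sigma]; simp [hBE]]
  exact of_iInter fun p => hE p.1 p.2

lemma IsBasicPolyhedralSet.inter {B C : Set (Fin n → ℤ)} (hB : IsBasicPolyhedralSet B)
    (hC : IsBasicPolyhedralSet C) : IsBasicPolyhedralSet (B ∩ C) := by
  rw [Set.inter_eq_iInter]
  exact iInter fun b => b.casesOn hC hB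

lemma IsPolyhedralSet.of_iUnion {ι : Type*} [Finite ι] {B : ι → Set (Fin n → ℤ)}
    (hB : ∀ i, IsBasicPolyhedralSet (B i)) : IsPolyhedralSet (⋃ i, B i) := by
  obtain ⟨k, ⟨e⟩⟩ := Finite.exists_equiv_fin ι
  exact ⟨k, B ∘ e.symm, fun i => hB _, (e.symm.surjective.iUnion_comp B).symm⟩

lemma IsBasicPolyhedralSet.isPolyhedralSet {B : Set (Fin n → ℤ)} (hB : IsBasicPolyhedralSet B) :
    IsPolyhedralSet B :=
  ⟨1, fun _ => B, fun _ => hB, (Set.iUnion_const B).symm⟩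

lemma IsPolyhedralSet.iUnion {ι : Type*} [Finite ι] {P : ι → Set (Fin n → ℤ)}
    (hP : ∀ i, IsPolyhedralSet (P i)) : IsPolyhedralSet (⋃ i, P i) := by
  choose k B hB hPB using hP
  rw [show (⋃ i, P i) = ⋃ p : Σ i, Fin (k i), B p.1 p.2 by rw [Set.iUnion_sigma]; simp [hPB]]
  exact of_iUnion fun p => hB p.1 p.2

lemma IsPolyhedralSet.biUnion {α : Type*} {s : Set α} (hs : s.Finite) {P : α → Set (Fin n → ℤ)}
    (hP : ∀ a ∈ s, IsPolyhedralSet (P a)) : IsPolyhedralSet (⋃ a ∈ s, P a) := by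
  have := hs.to_subtype
  rw [Set.biUnion_eq_iUnion]
  exact iUnion fun a => hP a a.2

lemma IsPolyhedralSet.inter {P Q : Set (Fin n → ℤ)} (hP : IsPolyhedralSet P)
    (hQ : IsPolyhedralSet Q) : IsPolyhedralSet (P ∩ Q) := by
  obtain ⟨k, B, hB, rfl⟩ := hP
  obtain ⟨l, C, hC, rfl⟩ := hQ
  rw [Set.iUnion_inter_iUnion]
  exact iUnion fun i => iUnion fun j => ((hB i).inter (hC j)).isPolyhedralSet

def IsIntegralAffine (φ : (Fin n → ℤ) → Fin k → ℤ) : Prop :=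
  ∃ (M : Matrix (Fin k) (Fin n) ℤ) (c : Fin k → ℤ), ∀ z, φ z = M *ᵥ z + c

lemma IsIntegralAffine.of_apply {φ : (Fin n → ℤ) → Fin k → ℤ}
    (h : ∀ i, ∃ (v : Fin n → ℤ) (c : ℤ), ∀ z, φ z i = v ⬝ᵥ z + c) : IsIntegralAffine φ := by
  choose v c hvc using h
  exact ⟨Matrix.of v, c, fun z => funext fun i => hvc i z⟩

lemma IsIntegralAffine.comp {p : ℕ} {ψ : (Fin k → ℤ) → Fin p → ℤ} {φ : (Fin n → ℤ) → Fin k → ℤ}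
    (hψ : IsIntegralAffine ψ) (hφ : IsIntegralAffine φ) : IsIntegralAffine (ψ ∘ φ) := by
  obtain ⟨M, c, hM⟩ := hψ
  obtain ⟨N, d, hN⟩ := hφ
  exact ⟨M * N, M *ᵥ d + c, fun z => by simp [hM, hN, mulVec_add, mulVec_mulVec, add_assoc]⟩

lemma isIntegralAffine_reindex (f : Fin k → Fin n) : IsIntegralAffine fun w : Fin n → ℤ => w ∘ f :=
  .of_apply fun i => ⟨Pi.single (f i) 1, 0, fun w => by simp [single_dotProduct]⟩

lemma IsIntegralAffine.dotProduct {φ : (Fin n → ℤ) → Fin k → ℤ} (hφ : IsIntegralAffine φ)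
    (u : Fin k → ℤ) : ∃ (v : Fin n → ℤ) (c : ℤ), ∀ z, u ⬝ᵥ φ z = v ⬝ᵥ z + c := by
  obtain ⟨M, c, hM⟩ := hφ
  exact ⟨u ᵥ* M, u ⬝ᵥ c, fun z => by rw [hM, dotProduct_add, dotProduct_mulVec]⟩

lemma IsElementarySet.preimage {E : Set (Fin k → ℤ)} (hE : IsElementarySet E)
    {φ : (Fin n → ℤ) → Fin k → ℤ} (hφ : IsIntegralAffine φ) : IsElementarySet (φ ⁻¹' E) := by
  rcases hE with ⟨u, a, rfl⟩ | ⟨u, a, rfl⟩ | ⟨u, a, b, hb, rfl⟩ <;>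
    obtain ⟨v, c, h⟩ := hφ.dotProduct u
  · show IsElementarySet {z | u ⬝ᵥ φ z = a}
    simpa only [h] using isElementarySet_eq v c a
  · show IsElementarySet {z | u ⬝ᵥ φ z > a}
    simp only [h]
    exact Or.inr <| Or.inl ⟨v, a - c, Set.ext fun z =>
      show v ⬝ᵥ z + c > a ↔ v ⬝ᵥ z > a - c by omega⟩
  · show IsElementarySet {z | u ⬝ᵥ φ z ≡ a [ZMOD b]}
    simpa only [h] using isElementarySet_modEq v c a hb

lemma IsBasicPolyhedralSet.preimage {B : Set (Fin k → ℤ)} (hB : IsBasicPolyhedralSet B)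
    {φ : (Fin n → ℤ) → Fin k → ℤ} (hφ : IsIntegralAffine φ) : IsBasicPolyhedralSet (φ ⁻¹' B) := by
  obtain ⟨l, E, hE, rfl⟩ := hB
  rw [Set.preimage_iInter]
  exact of_iInter fun i => (hE i).preimage hφ

lemma IsPolyhedralSet.preimage {P : Set (Fin k → ℤ)} (hP : IsPolyhedralSet P)
    {φ : (Fin n → ℤ) → Fin k → ℤ} (hφ : IsIntegralAffine φ) : IsPolyhedralSet (φ ⁻¹' P) := by
  obtain ⟨l, B, hB, rfl⟩ := hP
  rw [Set.preimage_iUnion]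
  exact of_iUnion fun i => (hB i).preimage hφ

lemma IsIntegralAffine.isBasicPolyhedralSet_setOf_eq {φ ψ : (Fin n → ℤ) → Fin k → ℤ}
    (hφ : IsIntegralAffine φ) (hψ : IsIntegralAffine ψ) : IsBasicPolyhedralSet {z | φ z = ψ z} := by
  obtain ⟨M, c, hM⟩ := hφ
  obtain ⟨N, d, hN⟩ := hψ
  have : {z | φ z = ψ z} = ⋂ i, {z | (M i - N i) ⬝ᵥ z + (c i - d i) = 0} := by
    ext z
    simp only [hM, hN, funext_iff, Set.mem_ofPred_eq, Set.mem_iInter, Pi.add_apply, mulVec,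
      sub_dotProduct]
    exact forall_congr' fun i => by constructor <;> intro h <;> linarith
  rw [this]
  exact .of_iInter fun i => isElementarySet_eq _ _ _

lemma IsElementarySet.exists_preimage_smul {E : Set (Fin n → ℤ)} (hE : IsElementarySet E)
    {s : ℤ} (hs : 0 < s) : ∃ E', IsElementarySet E' ∧ (s • ·) ⁻¹' E' = E := by
  rcases hE with ⟨u, a, rfl⟩ | ⟨u, a, rfl⟩ | ⟨u, a, b, hb, rfl⟩
  · refine ⟨_, Or.inl ⟨u, s * a, rfl⟩, Set.ext fun w => ?_⟩
    show u ⬝ᵥ (s • w) = s * a ↔ u ⬝ᵥ w = a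
    rw [dotProduct_smul, smul_eq_mul, mul_right_inj' hs.ne']
  · refine ⟨_, Or.inr <| Or.inl ⟨u, s * a, rfl⟩, Set.ext fun w => ?_⟩
    show u ⬝ᵥ (s • w) > s * a ↔ u ⬝ᵥ w > a
    rw [dotProduct_smul, smul_eq_mul, gt_iff_lt, gt_iff_lt, mul_lt_mul_iff_right₀ hs]
  · refine ⟨_, Or.inr <| Or.inr ⟨u, s * a, s * b, mul_pos hs hb, rfl⟩, Set.ext fun w => ?_⟩
    show u ⬝ᵥ (s • w) ≡ s * a [ZMOD s * b] ↔ u ⬝ᵥ w ≡ a [ZMOD b]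
    rw [dotProduct_smul, smul_eq_mul, Int.modEq_iff_dvd, Int.modEq_iff_dvd, ← mul_sub,
      mul_dvd_mul_iff_left hs.ne']

lemma IsBasicPolyhedralSet.exists_preimage_smul {B : Set (Fin n → ℤ)}
    (hB : IsBasicPolyhedralSet B) {s : ℤ} (hs : 0 < s) :
    ∃ B', IsBasicPolyhedralSet B' ∧ (s • ·) ⁻¹' B' = B := by
  obtain ⟨l, E, hE, rfl⟩ := hB
  choose E' hE' hpre using fun i => (hE i).exists_preimage_smul hs
  exact ⟨⋂ i, E' i, ⟨l, E', hE', rfl⟩, by simp only [Set.preimage_iInter, hpre]⟩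

lemma dotProduct_snoc (u : Fin (n + 1) → ℤ) (z : Fin n → ℤ) (x : ℤ) :
    u ⬝ᵥ Fin.snoc z x = Fin.init u ⬝ᵥ z + u (Fin.last n) * x := by
  simp [dotProduct, Fin.sum_univ_castSucc, Fin.init]

lemma IsBasicPolyhedralSet.setOf_exists_mul_eq_and_snoc_mem {B : Set (Fin (n + 1) → ℤ)}
    (hB : IsBasicPolyhedralSet B) {a : ℤ} (ha : a ≠ 0) (v : Fin n → ℤ) (e : ℤ) :
    IsBasicPolyhedralSet {z | ∃ x, a * x = v ⬝ᵥ z + e ∧ Fin.snoc z x ∈ B} := by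
  -- scaling by `a * a > 0` rather than by `a` keeps inequalities pointing the same way if `a < 0`
  obtain ⟨B', hB', hpre⟩ := hB.exists_preimage_smul (mul_self_pos.2 ha)
  set ψ : (Fin n → ℤ) → Fin (n + 1) → ℤ := fun z => Fin.snoc ((a * a) • z) (a * (v ⬝ᵥ z + e))
  have hψ : IsIntegralAffine ψ := .of_apply fun i => by
    refine Fin.lastCases ⟨a • v, a * e, fun z => ?_⟩
      (fun j => ⟨Pi.single j (a * a), 0, fun z => ?_⟩) i
    · simp only [ψ, Fin.snoc_last, smul_dotProduct, smul_eq_mul]; ring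
    · simp [ψ, single_dotProduct]
  have hψ_eq : ∀ z x, a * x = v ⬝ᵥ z + e → ψ z = (a * a) • Fin.snoc z x := fun z x h => by
    ext i
    refine Fin.lastCases ?_ (fun j => ?_) i
    · simp only [ψ, Fin.snoc_last, Pi.smul_apply, smul_eq_mul, ← h]; ring
    · simp [ψ]
  have : {z | ∃ x, a * x = v ⬝ᵥ z + e ∧ Fin.snoc z x ∈ B} =
      {z | v ⬝ᵥ z + e ≡ 0 [ZMOD |a|]} ∩ ψ ⁻¹' B' := by
    ext z
    simp only [Set.mem_ofPred_eq, Set.mem_inter_iff, Set.mem_preimage, Int.modEq_zero_iff_dvd,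
      abs_dvd, ← hpre]
    constructor
    · rintro ⟨x, hx, hxB⟩
      exact ⟨⟨x, hx.symm⟩, hψ_eq z x hx ▸ hxB⟩
    · rintro ⟨⟨x, hx⟩, hψB⟩
      exact ⟨x, hx.symm, hψ_eq z x hx.symm ▸ hψB⟩
  rw [this]
  exact (isElementarySet_modEq v e 0 (abs_pos.2 ha)).isBasicPolyhedralSet.inter (hB'.preimage hψ)

lemma Int.exists_mem_of_sub_mem_and_add_mem {S N : Set ℤ} {M : ℤ} (hM : 0 < M)
    (hS : ∀ x ∈ S, x ∉ N → x - M ∈ S ∧ x + M ∈ S) {x : ℤ} (hx : x ∈ S) :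
    ∃ y ∈ S, y ∈ N ∨ y ∈ Set.Ico 0 M := by
  suffices ∀ t y, y ∈ Set.Ico 0 M → y + M * t ∈ S → ∃ y ∈ S, y ∈ N ∨ y ∈ Set.Ico 0 M from
    this (x / M) (x % M) ⟨Int.emod_nonneg _ hM.ne', Int.emod_lt_of_pos _ hM⟩
      (by rwa [Int.emod_add_mul_ediv])
  intro t y hy
  induction t using Int.induction_on with
  | zero => exact fun h => ⟨y, by simpa using h, Or.inr hy⟩
  | succ i ih =>
    intro h
    by_cases hN : y + M * (i + 1) ∈ N
    · exact ⟨_, h, Or.inl hN⟩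
    · exact ih (by simpa [mul_add, ← add_assoc] using (hS _ h hN).1)
  | pred i ih =>
    intro h
    by_cases hN : y + M * (-i - 1) ∈ N
    · exact ⟨_, h, Or.inl hN⟩
    · exact ih (by convert (hS _ h hN).2 using 1; ring)

/-- `p = (a, v, e)` stands for the equation `a * x = v ⬝ᵥ z + e` in the last coordinate `x`. -/
def IsAnchored (M : ℤ) (A : Set (ℤ × (Fin n → ℤ) × ℤ)) (S : Set (Fin (n + 1) → ℤ)) : Prop :=
  ∀ z x, Fin.snoc z x ∈ S → (∃ p ∈ A, p.1 ≠ 0 ∧ p.1 * x = p.2.1 ⬝ᵥ z + p.2.2) ∨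
    (Fin.snoc z (x - M) ∈ S ∧ Fin.snoc z (x + M) ∈ S)

lemma IsAnchored.iInter {ι : Type*} {M : ℤ} {A : ι → Set (ℤ × (Fin n → ℤ) × ℤ)}
    {S : ι → Set (Fin (n + 1) → ℤ)} (h : ∀ i, IsAnchored M (A i) (S i)) :
    IsAnchored M (⋃ i, A i) (⋂ i, S i) := by
  intro z x hzx
  rw [Set.mem_iInter] at hzx
  by_cases hanc : ∃ i, ∃ p ∈ A i, p.1 ≠ 0 ∧ p.1 * x = p.2.1 ⬝ᵥ z + p.2.2
  · obtain ⟨i, p, hp, hpx⟩ := hanc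
    exact Or.inl ⟨p, Set.mem_iUnion.2 ⟨i, hp⟩, hpx⟩
  · have hshift := fun i => (h i z x (hzx i)).resolve_left fun hp => hanc ⟨i, hp⟩
    exact Or.inr ⟨Set.mem_iInter.2 fun i => (hshift i).1, Set.mem_iInter.2 fun i => (hshift i).2⟩

lemma isAnchored_setOf_dotProduct_eq (u : Fin (n + 1) → ℤ) (c M : ℤ) :
    IsAnchored M {(u (Fin.last n), -Fin.init u, c)} {w | u ⬝ᵥ w = c} := by
  intro z x hzx
  simp only [Set.mem_ofPred_eq, dotProduct_snoc] at hzx ⊢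
  by_cases ha : u (Fin.last n) = 0
  · right; simp only [ha, zero_mul] at hzx ⊢; exact ⟨hzx, hzx⟩
  · left; exact ⟨_, rfl, ha, by simp only [neg_dotProduct]; linarith⟩

lemma isAnchored_setOf_lt_dotProduct (u : Fin (n + 1) → ℤ) (c : ℤ) {M : ℤ} (hM : 0 ≤ M) :
    IsAnchored M ((fun d => (u (Fin.last n), -Fin.init u, c + 1 + d)) ''
      Set.Ico 0 (|u (Fin.last n)| * M)) {w | c < u ⬝ᵥ w} := by
  intro z x hzx
  simp only [Set.mem_ofPred_eq, dotProduct_snoc] at hzx ⊢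
  set a := u (Fin.last n)
  by_cases hwin : a * x - (c + 1 - Fin.init u ⬝ᵥ z) < |a| * M
  · refine Or.inl ⟨_, ⟨a * x - (c + 1 - Fin.init u ⬝ᵥ z), ⟨by omega, hwin⟩, rfl⟩, ?_,
      by simp only [neg_dotProduct]; ring⟩
    rintro (ha : a = 0)
    simp only [ha, abs_zero, zero_mul] at hwin hzx
    omega
  · have := mul_le_mul_of_nonneg_right (le_abs_self a) hM
    have := mul_le_mul_of_nonneg_right (neg_le_abs a) hM
    exact Or.inr ⟨by linarith, by linarith⟩

lemma isAnchored_setOf_dotProduct_modEq (u : Fin (n + 1) → ℤ) (c : ℤ) {b M : ℤ} (hbM : b ∣ M) :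
    IsAnchored M ∅ {w | u ⬝ᵥ w ≡ c [ZMOD b]} := by
  intro z x hzx
  simp only [Set.mem_ofPred_eq, dotProduct_snoc] at hzx ⊢
  have hM : u (Fin.last n) * M ≡ 0 [ZMOD b] :=
    Int.modEq_zero_iff_dvd.2 (dvd_mul_of_dvd_right hbM _)
  exact Or.inr ⟨by convert hzx.sub hM using 1 <;> ring, by convert hzx.add hM using 1 <;> ring⟩

lemma IsElementarySet.exists_isAnchored {E : Set (Fin (n + 1) → ℤ)} (hE : IsElementarySet E) :
    ∃ b > 0, ∀ M, 0 ≤ M → b ∣ M → ∃ A : Set (ℤ × (Fin n → ℤ) × ℤ), A.Finite ∧ IsAnchored M A E := by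
  rcases hE with ⟨u, c, rfl⟩ | ⟨u, c, rfl⟩ | ⟨u, c, b, hb, rfl⟩
  · exact ⟨1, one_pos, fun M _ _ =>
      ⟨_, Set.finite_singleton _, isAnchored_setOf_dotProduct_eq u c M⟩⟩
  · exact ⟨1, one_pos, fun M hM _ =>
      ⟨_, (Set.finite_Ico _ _).image _, isAnchored_setOf_lt_dotProduct u c hM⟩⟩
  · exact ⟨b, hb, fun M _ hbM =>
      ⟨∅, Set.finite_empty, isAnchored_setOf_dotProduct_modEq u c hbM⟩⟩

lemma IsBasicPolyhedralSet.exists_isAnchored {B : Set (Fin (n + 1) → ℤ)}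
    (hB : IsBasicPolyhedralSet B) :
    ∃ M > 0, ∃ A : Set (ℤ × (Fin n → ℤ) × ℤ), A.Finite ∧ IsAnchored M A B := by
  obtain ⟨l, E, hE, rfl⟩ := hB
  choose b hb hA using fun i => (hE i).exists_isAnchored
  have hM : 0 < ∏ i, b i := Finset.prod_pos fun i _ => hb i
  choose A hAfin hAE using fun i => hA i _ hM.le (Finset.dvd_prod_of_mem b (Finset.mem_univ i))
  exact ⟨_, hM, ⋃ i, A i, Set.finite_iUnion hAfin, IsAnchored.iInter hAE⟩

lemma IsAnchored.setOf_exists_snoc_mem_eq {M : ℤ} {A : Set (ℤ × (Fin n → ℤ) × ℤ)}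
    {S : Set (Fin (n + 1) → ℤ)} (hS : IsAnchored M A S) (hM : 0 < M) :
    {z | ∃ x, Fin.snoc z x ∈ S} =
      ⋃ p ∈ {p ∈ A ∪ (fun d => (1, 0, d)) '' Set.Ico 0 M | p.1 ≠ 0},
        {z | ∃ x, p.1 * x = p.2.1 ⬝ᵥ z + p.2.2 ∧ Fin.snoc z x ∈ S} := by
  ext z
  simp only [Set.mem_ofPred_eq, Set.mem_iUnion, exists_prop]
  constructor
  · rintro ⟨x, hx⟩
    obtain ⟨y, hyS, hy⟩ := Int.exists_mem_of_sub_mem_and_add_mem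
      (S := {x | (Fin.snoc z x : Fin (n + 1) → ℤ) ∈ S})
      (N := {x | ∃ p ∈ A, p.1 ≠ 0 ∧ p.1 * x = p.2.1 ⬝ᵥ z + p.2.2}) hM (fun x hx hN => (hS z x hx).resolve_left hN) hx
    rcases hy with ⟨p, hp, hp0, hpy⟩ | hy
    · exact ⟨p, ⟨Or.inl hp, hp0⟩, y, hpy, hyS⟩
    · exact ⟨(1, 0, y), ⟨Or.inr ⟨y, hy, rfl⟩, one_ne_zero⟩, y, by simp, hyS⟩
  · rintro ⟨p, -, x, -, hx⟩
    exact ⟨x, hx⟩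

lemma IsBasicPolyhedralSet.isPolyhedralSet_setOf_exists_snoc_mem {B : Set (Fin (n + 1) → ℤ)}
    (hB : IsBasicPolyhedralSet B) : IsPolyhedralSet {z | ∃ x, Fin.snoc z x ∈ B} := by
  obtain ⟨M, hM, A, hA, hBA⟩ := hB.exists_isAnchored
  rw [hBA.setOf_exists_snoc_mem_eq hM]
  exact .biUnion ((hA.union ((Set.finite_Ico _ _).image _)).sep _) fun p hp =>
    (hB.setOf_exists_mul_eq_and_snoc_mem hp.2 _ _).isPolyhedralSet

lemma IsPolyhedralSet.setOf_exists_snoc_mem {P : Set (Fin (n + 1) → ℤ)} (hP : IsPolyhedralSet P) :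
    IsPolyhedralSet {z | ∃ x, Fin.snoc z x ∈ P} := by
  obtain ⟨l, B, hB, rfl⟩ := hP
  have : {z | ∃ x, Fin.snoc z x ∈ ⋃ i, B i} = ⋃ i, {z | ∃ x, Fin.snoc z x ∈ B i} := by
    ext z
    simp only [Set.mem_ofPred_eq, Set.mem_iUnion]
    exact exists_comm
  rw [this]
  exact iUnion fun i => (hB i).isPolyhedralSet_setOf_exists_snoc_mem

lemma IsPolyhedralSet.setOf_exists_append_mem :
    ∀ {k} {P : Set (Fin (n + k) → ℤ)}, IsPolyhedralSet P →
      IsPolyhedralSet {y : Fin n → ℤ | ∃ x : Fin k → ℤ, Fin.append y x ∈ P}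
  | 0, P, hP => by
    have : {y : Fin n → ℤ | ∃ x : Fin 0 → ℤ, Fin.append y x ∈ P} = P := by
      ext y
      exact ⟨fun ⟨x, hx⟩ => by rwa [Fin.append_right_nil y x rfl] at hx,
        fun hy => ⟨Fin.elim0, by rwa [Fin.append_right_nil y _ rfl]⟩⟩
    rwa [this]
  | k + 1, P, hP => by
    have : {y : Fin n → ℤ | ∃ x : Fin (k + 1) → ℤ, Fin.append y x ∈ P} =
        {y | ∃ x : Fin k → ℤ, Fin.append y x ∈ {w | ∃ t, Fin.snoc w t ∈ P}} := by
      ext y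
      simp only [Set.mem_ofPred_eq]
      constructor
      · rintro ⟨x, hx⟩
        exact ⟨Fin.init x, x (Fin.last k), by rwa [← Fin.append_snoc, Fin.snoc_init_self]⟩
      · rintro ⟨x, t, hx⟩
        exact ⟨Fin.snoc x t, by rwa [Fin.append_snoc]⟩
    rw [this]
    exact hP.setOf_exists_snoc_mem.setOf_exists_append_mem

theorem polyhedral_image_affine_general {m m' : ℕ}
    (A : Matrix (Fin m') (Fin m) ℤ) (q : Fin m' → ℤ)
    (E : (Fin m → ℤ) → (Fin m' → ℤ)) (hE : ∀ p, E p = A.mulVec p + q)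
    (P : Set (Fin m → ℤ)) (hP : IsPolyhedralSet P) :
    IsPolyhedralSet (E '' P) := by
  have hEaff : IsIntegralAffine E := ⟨A, q, hE⟩
  have hgraph : IsPolyhedralSet
      ({w : Fin (m' + m) → ℤ | w ∘ Fin.castAdd m = E (w ∘ Fin.natAdd m')} ∩
        (· ∘ Fin.natAdd m') ⁻¹' P) :=
    ((isIntegralAffine_reindex _).isBasicPolyhedralSet_setOf_eq
      (hEaff.comp (isIntegralAffine_reindex _))).isPolyhedralSet.inter
      (hP.preimage (isIntegralAffine_reindex _))
  convert hgraph.setOf_exists_append_mem using 1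
  ext y
  simp [Function.comp_def, eq_comm, and_comm]

/-- The image of a polyhedral set under an integral affine transformation is polyhedral. -/
theorem polyhedral_image_affine {m m' : ℕ} (hm : 0 < m) (hm' : 0 < m')
    (A : Matrix (Fin m') (Fin m) ℤ) (q : Fin m' → ℤ)
    (E : (Fin m → ℤ) → (Fin m' → ℤ)) (hE : ∀ p, E p = A.mulVec p + q)
    (P : Set (Fin m → ℤ)) (hP : IsPolyhedralSet P) :
    IsPolyhedralSet (E '' P) :=
  polyhedral_image_affine_general A q E hE P hP
end

section
/- Let m be a positive integer, let P ⊆ ℕᵐ be a positive polyhedral set, and let ω₁, …, ω_m be positive integers. Define the weight of a vector (a₁,…,a_m) ∈ P to be a₁ω₁ + ⋯ + a_mω_m. Then the weighted growth series ∑_{n≥0} #{p ∈ P : ω(p) = n} zⁿ is a rational power series (the counts being finite since all ωᵢ are positive). -/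
/-- A formal power series with integer coefficients is rational if it is the quotient
of two integer polynomials. -/
def IsRationalSeries (f : PowerSeries ℤ) : Prop :=
  ∃ p q : Polynomial ℤ, q ≠ 0 ∧ f * (q : PowerSeries ℤ) = (p : PowerSeries ℤ)

open Set Pointwise

namespace IsRationalSeries

theorem coe (p : Polynomial ℤ) : IsRationalSeries p :=
  ⟨p, 1, one_ne_zero, by simp⟩

theorem zero : IsRationalSeries 0 := by
  simpa using coe 0

theorem add {f g : PowerSeries ℤ} (hf : IsRationalSeries f) (hg : IsRationalSeries g) :
    IsRationalSeries (f + g) := by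
  obtain ⟨p₁, q₁, hq₁, h₁⟩ := hf
  obtain ⟨p₂, q₂, hq₂, h₂⟩ := hg
  refine ⟨p₁ * q₂ + p₂ * q₁, q₁ * q₂, mul_ne_zero hq₁ hq₂, ?_⟩
  push_cast
  linear_combination (q₂ : PowerSeries ℤ) * h₁ + (q₁ : PowerSeries ℤ) * h₂

theorem neg {f : PowerSeries ℤ} (hf : IsRationalSeries f) : IsRationalSeries (-f) := by
  obtain ⟨p, q, hq, h⟩ := hf
  exact ⟨-p, q, hq, by rw [Polynomial.coe_neg, neg_mul, h]⟩

theorem sub {f g : PowerSeries ℤ} (hf : IsRationalSeries f) (hg : IsRationalSeries g) :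
    IsRationalSeries (f - g) :=
  sub_eq_add_neg f g ▸ hf.add hg.neg

theorem of_mul_coe {f : PowerSeries ℤ} {q : Polynomial ℤ} (hq : q ≠ 0)
    (h : IsRationalSeries (f * q)) : IsRationalSeries f := by
  obtain ⟨p, q', hq', h'⟩ := h
  exact ⟨p, q * q', mul_ne_zero hq hq', by rw [Polynomial.coe_mul, ← mul_assoc, h']⟩

end IsRationalSeries

theorem Set.finite_setOf_minimal {α : Type*} [PartialOrder α] [WellQuasiOrderedLE α]
    (P : α → Prop) : {x | Minimal P x}.Finite :=
  WellQuasiOrderedLE.finite_of_isAntichain (setOfPred_minimal_antichain P)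

namespace AddSubmonoid

variable {M : Type*} [AddCommMonoid M]

theorem coe_closure_insert (p : M) (N : Set M) :
    (closure (insert p N) : Set M) = ↑(closure N) ∪ ({p} + (closure (insert p N) : Set M)) := by
  refine subset_antisymm (fun x hx => ?_) ?_
  · rw [SetLike.mem_coe, insert_eq, closure_union, mem_sup] at hx
    obtain ⟨y, hy, z, hz, rfl⟩ := hx
    obtain ⟨_ | k, rfl⟩ := mem_closure_singleton.1 hy
    · simpa using Or.inl hz
    · refine Or.inr ⟨p, rfl, k • p + z, add_mem ?_ (closure_mono (subset_insert p N) hz), ?_⟩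
      · exact nsmul_mem (subset_closure (mem_insert p N)) k
      · rw [succ_nsmul', add_assoc]
  · refine union_subset (closure_mono (subset_insert p N)) ?_
    rintro _ ⟨q, hq, y, hy, rfl⟩
    rw [mem_singleton_iff.1 hq]
    exact add_mem (subset_closure (mem_insert p N)) hy

theorem add_add_subset_of_le {K L : AddSubmonoid M} (A : Set M) (h : K ≤ L) :
    A + L + K ⊆ A + L := by
  rw [add_assoc]
  exact add_subset_add_left ((add_subset_add_left h).trans L.coe_add_self_eq.subset)

/-- For each `e ∈ E`, the minimal coefficient vectors `c : N → ℕ` with `e + ∑ cᵢ nᵢ ∈ D` generate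
the rest, and there are finitely many of them by Dickson's lemma. -/
theorem exists_finite_eq_add_closure {E N D : Set M} (hE : E.Finite) (hN : N.Finite)
    (hDE : D ⊆ E + closure N) (hDN : D + closure N ⊆ D) :
    ∃ D₀ : Set M, D₀.Finite ∧ D = D₀ + closure N := by
  have : Fintype N := hN.fintype
  let φ := Fintype.linearCombination ℕ ((↑) : N → M)
  have mem_closure (x : M) : x ∈ closure N ↔ ∃ c, φ c = x := by
    simp [φ, mem_closure_iff_of_fintype, Fintype.linearCombination_apply, eq_comm]
  let D₀ := ⋃ e ∈ E, (fun c => e + φ c) '' {c | Minimal (fun c => e + φ c ∈ D) c}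
  have hD₀ : D₀ ⊆ D := by
    simp only [D₀, iUnion_subset_iff, image_subset_iff]
    exact fun e _ c hc => hc.1
  refine ⟨D₀, hE.biUnion fun e _ => (finite_setOf_minimal _).image _, ?_⟩
  refine subset_antisymm (fun d hd => ?_) ((add_subset_add_right hD₀).trans hDN)
  obtain ⟨e, he, _, hq, rfl⟩ := hDE hd
  obtain ⟨c, rfl⟩ := (mem_closure _).1 hq
  obtain ⟨c₀, hc₀c, hc₀⟩ := exists_minimal_le_of_wellFoundedLT (fun c => e + φ c ∈ D) c hd
  refine ⟨e + φ c₀, mem_biUnion he (mem_image_of_mem _ hc₀), φ (c - c₀),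
    (mem_closure _).2 ⟨_, rfl⟩, ?_⟩
  dsimp only
  rw [add_assoc, ← map_add, add_tsub_cancel_of_le hc₀c]

end AddSubmonoid

section Fibres

theorem AddMonoidHom.map_tsub_of_le {M G : Type*} [AddCommMonoid M] [PartialOrder M]
    [CanonicallyOrderedAdd M] [Sub M] [OrderedSub M] [AddGroup G] (f : M →+ G) {x y : M}
    (h : y ≤ x) : f (x - y) = f x - f y :=
  eq_sub_of_add_eq (by rw [← map_add, tsub_add_cancel_of_le h])

variable {σ G : Type*} [Finite σ] [AddGroup G] (f : (σ → ℕ) →+ G)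

/-- Subtracting a minimal nonzero kernel element below `x` stays in the kernel and decreases `x`. -/
theorem AddMonoidHom.closure_minimal_mker_diff_zero :
    AddSubmonoid.closure {x | Minimal (· ∈ (mker f : Set (σ → ℕ)) \ {0}) x} = mker f := by
  refine le_antisymm (AddSubmonoid.closure_le.2 fun x hx => hx.1.1) fun x hx => ?_
  induction x using WellFoundedLT.induction with
  | ind x ih =>
    by_cases hx₀ : x = 0
    · subst hx₀
      exact zero_mem _
    obtain ⟨n, hnx, hn⟩ :=
      exists_minimal_le_of_wellFoundedLT (· ∈ (mker f : Set (σ → ℕ)) \ {0}) x ⟨hx, hx₀⟩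
    have hn₀ : n ≠ 0 := hn.1.2
    have hxn : x - n ∈ mker f := by
      rw [mem_mker, f.map_tsub_of_le hnx, hx, hn.1.1, sub_zero]
    have hlt : x - n < x := by
      refine tsub_le_self.lt_of_ne fun h => hn₀ ?_
      simpa [h] using add_tsub_cancel_of_le hnx
    rw [← add_tsub_cancel_of_le hnx]
    exact add_mem (AddSubmonoid.subset_closure hn) (ih _ hlt hxn)

theorem AddMonoidHom.exists_finite_preimage_eq_add_closure (c : G) :
    ∃ E N : Set (σ → ℕ), E.Finite ∧ N.Finite ∧
      f ⁻¹' {c} = E + AddSubmonoid.closure N := by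
  refine ⟨{x | Minimal (· ∈ f ⁻¹' {c}) x}, {x | Minimal (· ∈ (mker f : Set (σ → ℕ)) \ {0}) x},
    finite_setOf_minimal _, finite_setOf_minimal _, ?_⟩
  rw [closure_minimal_mker_diff_zero]
  refine subset_antisymm (fun x hx => ?_) ?_
  · obtain ⟨e, hex, he⟩ := exists_minimal_le_of_wellFoundedLT _ x hx
    refine ⟨e, he, x - e, ?_, add_tsub_cancel_of_le hex⟩
    rw [SetLike.mem_coe, mem_mker, f.map_tsub_of_le hex, hx, he.1, sub_self]
  · rintro _ ⟨e, he, k, hk, rfl⟩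
    rw [mem_preimage, map_add, he.1, mem_mker.1 hk, add_zero]
    rfl

end Fibres

section GrowthSeries

variable {σ : Type*} [Fintype σ] {ω : σ → ℕ}

variable (ω) in
noncomputable def growthSeries (S : Set (σ → ℕ)) : PowerSeries ℤ :=
  PowerSeries.mk fun n => ((S ∩ {x | ω ⬝ᵥ x = n}).ncard : ℤ)

theorem finite_setOf_dotProduct_eq (hω : ∀ i, 0 < ω i) (n : ℕ) :
    {x : σ → ℕ | ω ⬝ᵥ x = n}.Finite := by
  classical
  refine (Set.finite_Iic fun _ => n).subset fun x hx i => ?_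
  calc x i ≤ ω i * x i := Nat.le_mul_of_pos_left _ (hω i)
    _ ≤ ω ⬝ᵥ x := Finset.single_le_sum (f := fun i => ω i * x i) (by simp) (Finset.mem_univ i)
    _ = n := hx

theorem growthSeries_union_add_inter (hω : ∀ i, 0 < ω i) (S T : Set (σ → ℕ)) :
    growthSeries ω (S ∪ T) + growthSeries ω (S ∩ T) = growthSeries ω S + growthSeries ω T := by
  ext n
  have hfin := finite_setOf_dotProduct_eq hω n
  simp only [growthSeries, map_add, PowerSeries.coeff_mk, union_inter_distrib_right]
  rw [inter_inter_distrib_right]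
  exact_mod_cast ncard_union_add_ncard_inter _ _ (hfin.inter_of_right _) (hfin.inter_of_right _)

@[simp]
theorem growthSeries_empty : growthSeries ω ∅ = 0 := by
  ext n
  simp [growthSeries]

theorem growthSeries_singleton (p : σ → ℕ) :
    growthSeries ω {p} = PowerSeries.monomial (ω ⬝ᵥ p) 1 := by
  ext n
  rw [growthSeries, PowerSeries.coeff_mk, PowerSeries.coeff_monomial]
  by_cases h : n = ω ⬝ᵥ p
  · simp [h, singleton_inter_of_mem]
  · simp [h, Ne.symm h]

theorem growthSeries_singleton_add (p : σ → ℕ) (S : Set (σ → ℕ)) :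
    growthSeries ω ({p} + S) = PowerSeries.X ^ (ω ⬝ᵥ p) * growthSeries ω S := by
  ext n
  rw [growthSeries, PowerSeries.coeff_mk, singleton_add, ← image_inter_preimage,
    ncard_image_of_injective _ (add_right_injective p), PowerSeries.coeff_X_pow_mul']
  split_ifs with h
  · rw [growthSeries, PowerSeries.coeff_mk]
    congr 3
    ext x
    simp only [mem_preimage, mem_ofPred_eq, dotProduct_add]
    omega
  · have hempty : S ∩ (p + ·) ⁻¹' {x | ω ⬝ᵥ x = n} = ∅ :=
      eq_empty_of_forall_notMem fun x hx => h (by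
        have hx' : ω ⬝ᵥ (p + x) = n := hx.2
        rw [dotProduct_add] at hx'
        omega)
    rw [hempty, ncard_empty, Nat.cast_zero]

theorem isRationalSeries_growthSeries_of_finite (hω : ∀ i, 0 < ω i) {S : Set (σ → ℕ)}
    (hS : S.Finite) : IsRationalSeries (growthSeries ω S) := by
  induction S, hS using Set.Finite.induction_on with
  | empty => simpa using IsRationalSeries.zero
  | @insert p S hpS _ ih =>
    have h := growthSeries_union_add_inter hω {p} S
    rw [singleton_inter_eq_empty.2 hpS, growthSeries_empty, add_zero, singleton_union,
      growthSeries_singleton, ← Polynomial.coe_monomial] at h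
    exact h ▸ (IsRationalSeries.coe _).add ih

end GrowthSeries

section LinearSets

variable {σ : Type*} [Fintype σ] {ω : σ → ℕ}

theorem dotProduct_pos_of_ne_zero (hω : ∀ i, 0 < ω i) {p : σ → ℕ} (hp : p ≠ 0) :
    0 < ω ⬝ᵥ p := by
  obtain ⟨i, hi⟩ := Function.ne_iff.1 hp
  exact Finset.sum_pos' (fun _ _ => Nat.zero_le _)
    ⟨i, Finset.mem_univ i, Nat.mul_pos (hω i) (Nat.pos_of_ne_zero hi)⟩

theorem isRationalSeries_growthSeries_add_closure (hω : ∀ i, 0 < ω i) (N : Finset (σ → ℕ)) :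
    ∀ {E : Set (σ → ℕ)}, E.Finite →
      IsRationalSeries (growthSeries ω (E + AddSubmonoid.closure (N : Set (σ → ℕ)))) := by
  classical
  induction N using Finset.induction_on with
  | empty =>
    intro E hE
    simpa using isRationalSeries_growthSeries_of_finite hω hE
  | insert p N _ ih =>
    intro E hE
    rw [Finset.coe_insert]
    by_cases hp : p = 0
    · rw [hp, AddSubmonoid.closure_insert_zero]
      exact ih hE
    set M₀ := AddSubmonoid.closure (N : Set (σ → ℕ))
    set M := AddSubmonoid.closure (insert p (N : Set (σ → ℕ)))
    set S := E + (M : Set (σ → ℕ))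
    have hS : S = (E + M₀) ∪ ({p} + S) :=
      calc S = E + (↑M₀ ∪ ({p} + (M : Set (σ → ℕ)))) :=
            congrArg (E + ·) (AddSubmonoid.coe_closure_insert p _)
        _ = (E + M₀) ∪ ({p} + S) := by rw [add_union, add_left_comm]
    have hstable : (E + M₀) ∩ ({p} + S) + M₀ ⊆ (E + M₀) ∩ ({p} + S) := by
      refine inter_add_subset.trans
        (inter_subset_inter (AddSubmonoid.add_add_subset_of_le E le_rfl) ?_)
      rw [add_assoc]
      exact add_subset_add_left
        (AddSubmonoid.add_add_subset_of_le E (AddSubmonoid.closure_mono (subset_insert p _)))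
    obtain ⟨D₀, hD₀, hD⟩ := AddSubmonoid.exists_finite_eq_add_closure hE N.finite_toSet
      inter_subset_left hstable
    have key := growthSeries_union_add_inter hω (E + M₀) ({p} + S)
    rw [← hS, hD, growthSeries_singleton_add] at key
    have hq : (Polynomial.X ^ (ω ⬝ᵥ p) - 1 : Polynomial ℤ) ≠ 0 := by
      simpa using Polynomial.X_pow_sub_C_ne_zero (dotProduct_pos_of_ne_zero hω hp) (1 : ℤ)
    refine IsRationalSeries.of_mul_coe hq ?_
    have hmul : growthSeries ω S * ↑(Polynomial.X ^ (ω ⬝ᵥ p) - 1 : Polynomial ℤ) =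
        growthSeries ω (D₀ + M₀) - growthSeries ω (E + M₀) := by
      push_cast
      linear_combination -key
    rw [hmul]
    exact (ih hD₀).sub (ih hE)

end LinearSets

section Polyhedral

variable {m : ℕ}

abbrev natCastVec (σ : Type*) : (σ → ℕ) →+ (σ → ℤ) := (Nat.castAddMonoidHom ℤ).compLeft σ

/-- The slack equations are `u·z - y = a + 1` for `u·z > a` and `u·z - b y + b s = a` for
`u·z ≡ a (mod b)`. -/
theorem IsElementarySet.exists_slack {E : Set (Fin m → ℤ)} (hE : IsElementarySet E) :
    ∃ (u : Fin m → ℤ) (α β c : ℤ), ∀ z : Fin m → ℕ,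
      natCastVec _ z ∈ E ↔ ∃ y s : ℕ, u ⬝ᵥ natCastVec _ z + α * y + β * s = c := by
  rcases hE with ⟨u, a, rfl⟩ | ⟨u, a, rfl⟩ | ⟨u, a, b, hb, rfl⟩
  · refine ⟨u, 0, 0, a, fun z => ?_⟩
    change u ⬝ᵥ _ = a ↔ _
    simp
  · refine ⟨u, -1, 0, a + 1, fun z => ?_⟩
    change u ⬝ᵥ _ > a ↔ _
    constructor
    · intro h
      refine ⟨(u ⬝ᵥ natCastVec _ z - (a + 1)).toNat, 0, ?_⟩
      rw [Int.toNat_of_nonneg (by omega)]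
      ring
    · rintro ⟨y, s, h⟩
      omega
  · refine ⟨u, -b, b, a, fun z => ?_⟩
    change u ⬝ᵥ _ ≡ a [ZMOD b] ↔ _
    constructor
    · intro h
      obtain ⟨t, ht⟩ := Int.modEq_iff_dvd.1 h
      refine ⟨(-t).toNat, t.toNat, ?_⟩
      linear_combination b * Int.toNat_sub_toNat_neg t - ht
    · rintro ⟨y, s, h⟩
      exact Int.modEq_iff_dvd.2 ⟨s - y, by linear_combination -h⟩

theorem IsBasicPolyhedralSet.inter_s9 {B₁ B₂ : Set (Fin m → ℤ)} (h₁ : IsBasicPolyhedralSet B₁)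
    (h₂ : IsBasicPolyhedralSet B₂) : IsBasicPolyhedralSet (B₁ ∩ B₂) := by
  obtain ⟨k₁, E₁, hE₁, rfl⟩ := h₁
  obtain ⟨k₂, E₂, hE₂, rfl⟩ := h₂
  refine ⟨k₁ + k₂, Fin.append E₁ E₂, Fin.addCases (by simpa using hE₁) (by simpa using hE₂), ?_⟩
  ext z
  simp [Fin.forall_fin_add]

theorem IsBasicPolyhedralSet.exists_preimage_eq_add_closure {B : Set (Fin m → ℤ)}
    (hB : IsBasicPolyhedralSet B) :
    ∃ E N : Set (Fin m → ℕ), E.Finite ∧ N.Finite ∧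
      natCastVec _ ⁻¹' B = E + AddSubmonoid.closure N := by
  obtain ⟨k, El, hEl, rfl⟩ := hB
  choose u α β c hc using fun j => (hEl j).exists_slack
  let f : (Fin m ⊕ (Fin k ⊕ Fin k) → ℕ) →+ (Fin k → ℤ) := AddMonoidHom.mk'
    (fun x j => u j ⬝ᵥ natCastVec _ (x ∘ Sum.inl) + α j * x (.inr (.inl j)) +
      β j * x (.inr (.inr j)))
    (fun x y => by
      funext j
      simp only [Pi.add_apply, Pi.add_comp, Nat.cast_add, map_add, dotProduct_add]
      ring)
  let π : (Fin m ⊕ (Fin k ⊕ Fin k) → ℕ) →+ (Fin m → ℕ) :=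
    (LinearMap.funLeft ℕ ℕ Sum.inl).toAddMonoidHom
  have hproj : natCastVec _ ⁻¹' ⋂ j, El j = π '' (f ⁻¹' {c}) := by
    ext z
    simp only [mem_preimage, mem_iInter, hc]
    constructor
    · intro h
      choose y s hys using h
      exact ⟨Sum.elim z (Sum.elim y s), funext hys, rfl⟩
    · rintro ⟨x, hx, rfl⟩ j
      exact ⟨_, _, congrFun hx j⟩
  obtain ⟨E, N, hE, hN, hfib⟩ := f.exists_finite_preimage_eq_add_closure c
  refine ⟨π '' E, π '' N, hE.image _, hN.image _, ?_⟩
  rw [hproj, hfib, image_add, ← AddSubmonoid.coe_map, AddMonoidHom.map_mclosure]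

end Polyhedral

section Union

variable {σ ι : Type*} [Fintype σ] {ω : σ → ℕ}

theorem isRationalSeries_growthSeries_biUnion (hω : ∀ i, 0 < ω i) (C : Set (σ → ℕ) → Prop)
    (hC : ∀ S T, C S → C T → C (S ∩ T)) (hrat : ∀ S, C S → IsRationalSeries (growthSeries ω S))
    (s : Finset ι) :
    ∀ {B : ι → Set (σ → ℕ)}, (∀ i, C (B i)) →
      IsRationalSeries (growthSeries ω (⋃ i ∈ s, B i)) := by
  classical
  induction s using Finset.induction_on with
  | empty =>
    intro B _
    simpa using IsRationalSeries.zero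
  | insert a s _ ih =>
    intro B hB
    have key := growthSeries_union_add_inter hω (B a) (⋃ i ∈ s, B i)
    rw [inter_iUnion₂] at key
    rw [Finset.set_biUnion_insert, eq_sub_of_add_eq key]
    exact ((hrat _ (hB a)).add (ih hB)).sub (ih fun i => hC _ _ (hB a) (hB i))

end Union

theorem IsPolyhedralSet.isRationalSeries_growthSeries_preimage {m : ℕ} {ω : Fin m → ℕ}
    (hω : ∀ i, 0 < ω i) {P : Set (Fin m → ℤ)} (hP : IsPolyhedralSet P) :
    IsRationalSeries (growthSeries ω (natCastVec _ ⁻¹' P)) := by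
  obtain ⟨k, B, hB, rfl⟩ := hP
  have hrat (S : Set (Fin m → ℕ)) (hS : ∃ B, IsBasicPolyhedralSet B ∧ S = natCastVec _ ⁻¹' B) :
      IsRationalSeries (growthSeries ω S) := by
    obtain ⟨B, hB, rfl⟩ := hS
    obtain ⟨E, N, hE, hN, hEN⟩ := hB.exists_preimage_eq_add_closure
    rw [hEN, ← hN.coe_toFinset]
    exact isRationalSeries_growthSeries_add_closure hω _ hE
  simpa using isRationalSeries_growthSeries_biUnion hω _
    (fun _ _ ⟨B₁, hB₁, h₁⟩ ⟨B₂, hB₂, h₂⟩ => ⟨_, hB₁.inter_s9 hB₂, by rw [h₁, h₂, preimage_inter]⟩)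
    hrat Finset.univ (fun i => ⟨B i, hB i, rfl⟩)

theorem natCard_weight_eq_ncard_preimage {m : ℕ} {P : Set (Fin m → ℤ)}
    (hP : ∀ z ∈ P, ∀ i, 0 ≤ z i) (ω : Fin m → ℕ) (n : ℕ) :
    Nat.card {z : P // (∑ i, (z : Fin m → ℤ) i * (ω i : ℤ)) = (n : ℤ)} =
      (natCastVec _ ⁻¹' P ∩ {x | ω ⬝ᵥ x = n}).ncard := by
  have hweight (x : Fin m → ℕ) :
      (∑ i, natCastVec _ x i * (ω i : ℤ) = n) ↔ ω ⬝ᵥ x = n := by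
    simp [dotProduct, mul_comm, ← Nat.cast_inj (R := ℤ)]
  have hinj : Function.Injective (natCastVec (Fin m)) :=
    fun x y h => funext fun i => Nat.cast_injective (congrFun h i)
  rw [← ncard_image_of_injective _ hinj, ← Nat.card_coe_set_eq,
    Nat.card_congr (Equiv.subtypeSubtypeEquivSubtypeInter (· ∈ P)
      fun z => ∑ i, z i * (ω i : ℤ) = n)]
  refine Nat.card_congr (Equiv.subtypeEquivRight fun z => ⟨fun ⟨hz, hzn⟩ => ?_, ?_⟩)
  · have hz' : natCastVec _ (fun i => (z i).toNat) = z :=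
      funext fun i => Int.toNat_of_nonneg (hP z hz i)
    refine ⟨_, ⟨?_, ?_⟩, hz'⟩
    · rwa [mem_preimage, hz']
    · rwa [mem_ofPred_eq, ← hweight, hz']
  · rintro ⟨x, ⟨hx, hxn⟩, rfl⟩
    exact ⟨hx, (hweight x).2 hxn⟩

theorem positive_polyhedral_growth_series_rational_general {m : ℕ}
    (P : Set (Fin m → ℤ)) (hP : IsPolyhedralSet P)
    (hPpos : ∀ z ∈ P, ∀ i, 0 ≤ z i)
    (ω : Fin m → ℕ) (hω : ∀ i, 0 < ω i) :
    IsRationalSeries (PowerSeries.mk fun n =>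
      (Nat.card {z : P // (∑ i, (z : Fin m → ℤ) i * (ω i : ℤ)) = (n : ℤ)} : ℤ)) := by
  simp_rw [natCard_weight_eq_ncard_preimage hPpos]
  exact hP.isRationalSeries_growthSeries_preimage hω

/-- The weighted growth series of a positive polyhedral set, with positive integer
weights on the coordinates, is rational. -/
theorem positive_polyhedral_growth_series_rational {m : ℕ} (hm : 0 < m)
    (P : Set (Fin m → ℤ)) (hP : IsPolyhedralSet P)
    (hPpos : ∀ z ∈ P, ∀ i, 0 ≤ z i)
    (ω : Fin m → ℕ) (hω : ∀ i, 0 < ω i) :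
    IsRationalSeries (PowerSeries.mk fun n =>
      (Nat.card {z : P // (∑ i, (z : Fin m → ℤ) i * (ω i : ℤ)) = (n : ℤ)} : ℤ)) :=
  positive_polyhedral_growth_series_rational_general P hP hPpos ω hω
end
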